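/- arXiv:2506.21756 — 4 statements merged into one kernel-verified Lean document; each statement's English description precedes it below -/
import Mathlib

section
/- Every d-regular graph with d ≥ 3 contains a spanning subgraph G' with minimum degree at least 2 and maximum degree at most 3. -/
/-!
By Hall's theorem, a `d`-regular graph with `d ≥ 1` has a permutation `σ` with `v ~ σ v` for
every `v`: the edges `{v, σ v}` cover every vertex by vertex-disjoint cycles and single edges,
the latter coming from the 2-cycles of `σ`. For `d ≥ 2` the same argument gives a second
permutation `τ` with `v ~ τ v ≠ σ v`. Adding the edge `{v, τ v}` at every vertex `v` on a
2-cycle of `σ` lifts its degree to 2, and since `τ` is injective each vertex receives at most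
one such extra edge, so no degree exceeds 3.
-/

open Finset Function Equiv

theorem exists_injective_of_le_card_of_card_le {α β : Type*} [Fintype α] [Fintype β]
    (r : α → β → Prop) [DecidableRel r] {m : ℕ} (hm : 0 < m)
    (hout : ∀ a, m ≤ #{b | r a b}) (hin : ∀ b, #{a | r a b} ≤ m) :
    ∃ f : α → β, Injective f ∧ ∀ a, r a (f a) := by
  refine (Fintype.all_card_le_filter_rel_iff_exists_injective r).1 fun A => ?_
  set B : Finset β := {b | ∃ a ∈ A, r a b}
  refine Nat.le_of_mul_le_mul_right (card_mul_le_card_mul r (s := A) (t := B) (fun a ha => ?_)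
    fun b _ => ?_) hm
  · convert hout a using 2
    ext b
    simp only [bipartiteAbove, B, mem_filter, mem_univ, true_and, and_iff_right_iff_imp]
    exact fun hab => ⟨a, ha, hab⟩
  · exact (card_le_card (monotone_filter_left _ (subset_univ A))).trans (hin b)

theorem exists_perm_of_le_card_of_card_le {α : Type*} [Fintype α]
    (r : α → α → Prop) [DecidableRel r] {m : ℕ} (hm : 0 < m)
    (hout : ∀ a, m ≤ #{b | r a b}) (hin : ∀ b, #{a | r a b} ≤ m) :
    ∃ σ : Perm α, ∀ a, r a (σ a) := by
  obtain ⟨f, hf, hrf⟩ := exists_injective_of_le_card_of_card_le r hm hout hin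
  exact ⟨ofBijective f (Finite.injective_iff_bijective.1 hf), hrf⟩

namespace SimpleGraph

variable {V : Type*}

section Perms

def ofPerms (σ τ : Perm V) : SimpleGraph V :=
  fromRel fun u v => σ u = v ∨ (σ (σ u) = u ∧ τ u = v)

/-- The neighbour of `v` in `ofPerms σ τ` other than `σ v`: it is `σ⁻¹ v` unless that coincides
with `σ v`, i.e. unless `v` lies on a 2-cycle of `σ`. -/
def ofPermsPartner [DecidableEq V] (σ τ : Perm V) (v : V) : V :=
  if σ (σ v) = v then τ v else σ.symm v

variable {σ τ : Perm V}

theorem ofPerms_le {G : SimpleGraph V} (hσ : ∀ v, G.Adj v (σ v)) (hτ : ∀ v, G.Adj v (τ v)) :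
    ofPerms σ τ ≤ G := by
  rintro u v ⟨-, (⟨rfl | ⟨-, rfl⟩⟩ | ⟨rfl | ⟨-, rfl⟩⟩)⟩
  exacts [hσ u, hτ u, (hσ v).symm, (hτ v).symm]

variable [DecidableEq V]

theorem neighborSet_ofPerms_subset (v : V) :
    (ofPerms σ τ).neighborSet v ⊆ {σ v, ofPermsPartner σ τ v, τ.symm v} := by
  rintro u ⟨-, (⟨rfl | ⟨hv, rfl⟩⟩ | ⟨rfl | ⟨-, rfl⟩⟩)⟩
  · exact .inl rfl
  · simp [ofPermsPartner, hv]
  · by_cases hv : σ (σ (σ u)) = σ u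
    · have : u = σ (σ u) := σ.injective hv.symm
      simp [ofPermsPartner, ← this]
    · simp [ofPermsPartner, hv]
  · simp

theorem pair_subset_neighborSet_ofPerms (v : V) (hσ : σ v ≠ v) (hτ : τ v ≠ v) :
    {σ v, ofPermsPartner σ τ v} ⊆ (ofPerms σ τ).neighborSet v := by
  rintro u (rfl | rfl)
  · exact ⟨hσ.symm, .inl (.inl rfl)⟩
  · unfold ofPermsPartner
    split_ifs with h
    · exact ⟨hτ.symm, .inl (.inr ⟨h, rfl⟩)⟩
    · exact ⟨fun h' => hσ (σ.symm_apply_eq.1 h'.symm).symm, .inr (.inl (apply_symm_apply σ v))⟩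

theorem ne_ofPermsPartner (v : V) (hτσ : τ v ≠ σ v) : σ v ≠ ofPermsPartner σ τ v := by
  unfold ofPermsPartner
  split_ifs with h
  · exact hτσ.symm
  · contrapose! h
    rw [h, apply_symm_apply]

theorem two_le_ncard_neighborSet_ofPerms [Finite V] (v : V) (hσ : σ v ≠ v) (hτ : τ v ≠ v)
    (hτσ : τ v ≠ σ v) : 2 ≤ ((ofPerms σ τ).neighborSet v).ncard :=
  calc 2 = ({σ v, ofPermsPartner σ τ v} : Set V).ncard :=
        (Set.ncard_pair (ne_ofPermsPartner v hτσ)).symm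
    _ ≤ _ := Set.ncard_le_ncard (pair_subset_neighborSet_ofPerms v hσ hτ)

theorem ncard_neighborSet_ofPerms_le_three (v : V) :
    ((ofPerms σ τ).neighborSet v).ncard ≤ 3 :=
  calc _ ≤ ({σ v, ofPermsPartner σ τ v, τ.symm v} : Set V).ncard :=
        Set.ncard_le_ncard (neighborSet_ofPerms_subset v) (Set.toFinite _)
    _ ≤ 3 := by
        rw [← coe_pair, ← coe_insert, Set.ncard_coe_finset]
        exact card_le_three

end Perms

section Regular

variable [Fintype V] {G : SimpleGraph V} [DecidableRel G.Adj] {d : ℕ}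

theorem IsRegularOfDegree.exists_perm_adj (hG : G.IsRegularOfDegree d) (hd : 0 < d) :
    ∃ σ : Perm V, ∀ v, G.Adj v (σ v) := by
  have hdeg (v : V) : #{u | G.Adj v u} = d := by
    rw [← neighborFinset_eq_filter, card_neighborFinset_eq_degree, hG v]
  refine exists_perm_of_le_card_of_card_le G.Adj hd (fun v => (hdeg v).ge) fun u => ?_
  simp only [G.adj_comm _ u, hdeg, le_refl]

theorem IsRegularOfDegree.exists_perm_adj_ne (hG : G.IsRegularOfDegree d) (hd : 2 ≤ d)
    (σ : Perm V) (hσ : ∀ v, G.Adj v (σ v)) :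
    ∃ τ : Perm V, ∀ v, G.Adj v (τ v) ∧ τ v ≠ σ v := by
  classical
  have hdeg {v w : V} (hvw : G.Adj v w) : #{u | G.Adj v u ∧ u ≠ w} = d - 1 := by
    have : ({u | G.Adj v u ∧ u ≠ w} : Finset V) = (G.neighborFinset v).erase w := by
      ext; simp [and_comm]
    rw [this, card_erase_of_mem ((mem_neighborFinset ..).2 hvw), card_neighborFinset_eq_degree,
      hG v]
  refine exists_perm_of_le_card_of_card_le (fun v u => G.Adj v u ∧ u ≠ σ v) (m := d - 1)
    (by omega) (fun v => (hdeg (hσ v)).ge) fun u => ?_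
  have : ({v | G.Adj v u ∧ u ≠ σ v} : Finset V) =
      ({v | G.Adj u v ∧ v ≠ σ.symm u} : Finset V) := by
    ext v; simp [G.adj_comm v u, eq_symm_apply, eq_comm]
  rw [this, hdeg (by simpa using (hσ (σ.symm u)).symm)]

end Regular

end SimpleGraph

/-- Every `d`-regular graph with `d ≥ 3` contains a spanning subgraph with
    minimum degree at least 2 and maximum degree at most 3. -/
theorem regular_has_subgraph_deg_two_three {V : Type*} [Fintype V]
    (G : SimpleGraph V) (d : ℕ) (hd : 3 ≤ d)
    (hreg : ∀ v, (G.neighborSet v).ncard = d) :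
    ∃ H : SimpleGraph V, H ≤ G ∧
      ∀ v, 2 ≤ (H.neighborSet v).ncard ∧ (H.neighborSet v).ncard ≤ 3 := by
  classical
  have hG : G.IsRegularOfDegree d := fun v => by
    rw [← G.card_neighborSet_eq_degree, ← Nat.card_eq_fintype_card, Nat.card_coe_set_eq, hreg]
  obtain ⟨σ, hσ⟩ := hG.exists_perm_adj (by omega)
  obtain ⟨τ, hτ⟩ := hG.exists_perm_adj_ne (by omega) σ hσ
  refine ⟨.ofPerms σ τ, SimpleGraph.ofPerms_le hσ fun v => (hτ v).1, fun v => ⟨?_, ?_⟩⟩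
  · exact SimpleGraph.two_le_ncard_neighborSet_ofPerms v (hσ v).ne' (hτ v).1.ne' (hτ v).2
  · exact SimpleGraph.ncard_neighborSet_ofPerms_le_three v
end

section
/- Let L be a near-2-factor (a spanning graph that is a disjoint union of cycles and exactly one path) with path P(L) having endpoints u and v. Let w be a vertex on a cycle of L and x a neighbor of w in L. Then the graph L' obtained by deleting the edge {w,x} and adding the edge {v,w} is again a near-2-factor, and its unique path has u as one endpoint and x as the other endpoint. -/
/-- A near-2-factor: a spanning graph that is a disjoint union of cycles and
    exactly one path, whose path has endpoints `u` and `v`.  Equivalently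
    (in a finite graph): `u ≠ v`, both `u` and `v` have degree 1, and all
    other vertices have degree 2. -/
def IsNearTwoFactor {V : Type*} (L : SimpleGraph V) (u v : V) : Prop :=
  u ≠ v ∧ (L.neighborSet u).ncard = 1 ∧ (L.neighborSet v).ncard = 1 ∧
    ∀ w, w ≠ u → w ≠ v → (L.neighborSet w).ncard = 2

/-!
The two path endpoints `u, v` are the only odd-degree vertices, so by the handshake lemma applied
to the component of `u` they lie in the same component; hence `w`, which is not reachable from
`u`, is distinct from and non-adjacent to `v`, and so is its neighbour `x`. Rewriting the new
graph as `(L \ edge w x) ⊔ edge v w`, the degree of `x` drops to 1, that of `v` rises to 2, that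
of `w` stays 2, and all other degrees are unchanged.
-/

namespace SimpleGraph

variable {V : Type*} {G : SimpleGraph V} {a b z : V}

lemma ncard_neighborSet_eq_degree [Fintype V] (G : SimpleGraph V) [DecidableRel G.Adj] (a : V) :
    (G.neighborSet a).ncard = G.degree a := by
  rw [← card_neighborSet_eq_degree, Set.ncard_eq_toFinset_card', Set.toFinset_card]

lemma ConnectedComponent.neighborSet_spanningCoe_toSimpleGraph_of_mem {C : G.ConnectedComponent}
    (hz : z ∈ C.supp) : C.toSimpleGraph.spanningCoe.neighborSet z = G.neighborSet z := by
  ext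
  simp only [mem_neighborSet, ConnectedComponent.adj_spanningCoe_toSimpleGraph, hz, true_and]

theorem exists_ne_reachable_odd_ncard_neighborSet [Finite V] (G : SimpleGraph V) {u : V}
    (hu : Odd (G.neighborSet u).ncard) :
    ∃ w, w ≠ u ∧ G.Reachable u w ∧ Odd (G.neighborSet w).ncard := by
  classical
  have := Fintype.ofFinite V
  set C := G.connectedComponentMk u
  have hsupp : ∀ {y}, y ∈ C.supp ↔ G.Reachable u y := by
    intro y
    rw [ConnectedComponent.mem_supp_iff, ConnectedComponent.eq]
    exact reachable_comm
  set H := C.toSimpleGraph.spanningCoe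
  have hHu : Odd (H.degree u) := by
    rwa [← ncard_neighborSet_eq_degree,
      ConnectedComponent.neighborSet_spanningCoe_toSimpleGraph_of_mem (hsupp.2 .rfl)]
  obtain ⟨w, hwu, hw⟩ := H.exists_ne_odd_degree_of_exists_odd_degree u hHu
  obtain ⟨y, hy⟩ : (H.neighborSet w).Nonempty := by
    rw [← Set.ncard_pos, ncard_neighborSet_eq_degree]
    exact hw.pos
  have hwC : w ∈ C.supp := (ConnectedComponent.adj_spanningCoe_toSimpleGraph C).1 hy |>.1
  rw [← ncard_neighborSet_eq_degree,
    ConnectedComponent.neighborSet_spanningCoe_toSimpleGraph_of_mem hwC] at hw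
  exact ⟨w, hwu, hsupp.1 hwC, hw⟩

lemma neighborSet_edge_left (h : a ≠ b) : (edge a b).neighborSet a = {b} := by
  ext
  simp only [mem_neighborSet, edge_adj, Set.mem_singleton_iff]
  grind

lemma neighborSet_edge_of_ne (ha : z ≠ a) (hb : z ≠ b) : (edge a b).neighborSet z = ∅ := by
  ext
  simp [edge_adj, ha, hb]

lemma neighborSet_sdiff_edge_of_ne (ha : z ≠ a) (hb : z ≠ b) :
    (G \ edge a b).neighborSet z = G.neighborSet z := by
  simp [neighborSet_edge_of_ne ha hb]

lemma neighborSet_sup_edge_of_ne (ha : z ≠ a) (hb : z ≠ b) :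
    (G ⊔ edge a b).neighborSet z = G.neighborSet z := by
  simp [neighborSet_edge_of_ne ha hb]

lemma ncard_neighborSet_sdiff_edge_add_one (h : G.Adj a b)
    (hfin : (G.neighborSet a).Finite := by toFinite_tac) :
    ((G \ edge a b).neighborSet a).ncard + 1 = (G.neighborSet a).ncard := by
  rw [neighborSet_sdiff, neighborSet_edge_left h.ne]
  exact Set.ncard_sdiff_singleton_add_one h hfin

lemma ncard_neighborSet_sup_edge (hne : a ≠ b) (h : ¬G.Adj a b)
    (hfin : (G.neighborSet a).Finite := by toFinite_tac) :
    ((G ⊔ edge a b).neighborSet a).ncard = (G.neighborSet a).ncard + 1 := by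
  rw [neighborSet_sup, neighborSet_edge_left hne, Set.union_singleton]
  exact Set.ncard_insert_of_notMem h hfin

lemma fromEdgeSet_edgeSet_sdiff_union (a b c d : V) :
    fromEdgeSet ((G.edgeSet \ {s(a, b)}) ∪ {s(c, d)}) = G \ edge a b ⊔ edge c d := by
  rw [fromEdgeSet_union, fromEdgeSet_sdiff, fromEdgeSet_edgeSet]
  rfl

end SimpleGraph

open SimpleGraph

theorem IsNearTwoFactor.reachable {V : Type*} [Finite V] {L : SimpleGraph V} {u v : V}
    (hL : IsNearTwoFactor L u v) : L.Reachable u v := by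
  obtain ⟨-, hu, -, hother⟩ := hL
  obtain ⟨w, hwu, huw, hw⟩ := L.exists_ne_reachable_odd_ncard_neighborSet (hu ▸ odd_one)
  by_cases hwv : w = v
  · exact hwv ▸ huw
  · rw [hother w hwu hwv] at hw
    exact absurd hw (by decide)

/-- Rotation: if `L` is a near-2-factor with path endpoints `u, v`, `w` lies on
    a cycle of `L` (i.e., is not reachable from `u`) and `x` is a neighbor of
    `w` in `L`, then deleting the edge `{w,x}` and adding the edge `{v,w}`
    yields a near-2-factor whose path has endpoints `u` and `x`. -/
theorem rotation_near_two_factor {V : Type*} [Fintype V] (L : SimpleGraph V)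
    (u v w x : V) (hL : IsNearTwoFactor L u v) (hw : ¬ L.Reachable u w)
    (hx : L.Adj w x) :
    IsNearTwoFactor
      (SimpleGraph.fromEdgeSet ((L.edgeSet \ {s(w, x)}) ∪ {s(v, w)})) u x := by
  have huv := hL.reachable
  obtain ⟨hne, hdu, hdv, hd2⟩ := hL
  have hwu : w ≠ u := by rintro rfl; exact hw .rfl
  have hxu : x ≠ u := by rintro rfl; exact hw hx.reachable.symm
  have hwv : w ≠ v := by rintro rfl; exact hw huv
  have hxv : x ≠ v := by rintro rfl; exact hw (huv.trans hx.reachable.symm)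
  have hvw : ¬L.Adj v w := fun h => hw (huv.trans h.reachable)
  rw [fromEdgeSet_edgeSet_sdiff_union]
  refine ⟨hxu.symm, ?_, ?_, fun z hzu hzx => ?_⟩
  · rw [neighborSet_sup_edge_of_ne hne hwu.symm, neighborSet_sdiff_edge_of_ne hwu.symm hxu.symm]
    exact hdu
  · have := ncard_neighborSet_sdiff_edge_add_one (b := w) hx.symm
    have := hd2 x hxu hxv
    rw [neighborSet_sup_edge_of_ne hxv hx.ne.symm, edge_comm]
    omega
  · rcases eq_or_ne v z with rfl | hzv
    · rw [ncard_neighborSet_sup_edge (G := L \ edge w x) hwv.symm (fun h => hvw h.1),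
        neighborSet_sdiff_edge_of_ne hwv.symm hxv.symm, hdv]
    rcases eq_or_ne w z with rfl | hzw
    · have := ncard_neighborSet_sdiff_edge_add_one hx
      have := hd2 w hwu hwv
      rw [edge_comm v, ncard_neighborSet_sup_edge (G := L \ edge w x) hwv (fun h => hvw h.1.symm)]
      omega
    rw [neighborSet_sup_edge_of_ne hzv.symm hzw.symm, neighborSet_sdiff_edge_of_ne hzw.symm hzx]
    exact hd2 z hzu hzv.symm
end

section
/- For positive integers c, m, σ with 3m ≤ c, σ ≤ m, and m/c ≤ 1/9, we have C(c, m - σ) / C(c - 3m, m) ≤ 2 · (m/c)^σ, provided m/c is sufficiently small (e.g., c ≥ 9am for appropriate a ensuring the constant 2 suffices for large c). -/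
/-!
Bound the numerator by `C(c, m - σ) ≤ c^(m-σ) / (m-σ)!` and the denominator by
`C(c - 3m, m) ≥ (c - 4m)^m / m!`. Since `m! / (m-σ)! ≤ m^σ`, the ratio is at most
`(m/c)^σ · (c / (c - 4m))^m`, and Bernoulli's inequality `(1 - 4m/c)^m ≥ 1 - 4m²/c ≥ 1/2`
bounds the last factor by `2` once `c ≥ 8m²`.
-/

open Nat

lemma pow_le_two_mul_sub_pow {x t : ℝ} (n : ℕ) (hx : 0 < x) (ht : 0 ≤ t)
    (h : 2 * n * t ≤ x) : x ^ n ≤ 2 * (x - t) ^ n := by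
  rcases n.eq_zero_or_pos with rfl | hn
  · norm_num
  have htx : t / x ≤ 1 / 2 := by
    rw [div_le_iff₀ hx]
    nlinarith [(one_le_cast (α := ℝ)).2 hn]
  have hntx : n * (t / x) ≤ 1 / 2 := by
    rw [mul_div_assoc', div_le_iff₀ hx]
    linarith
  have bernoulli : 1 + n * -(t / x) ≤ (1 + -(t / x)) ^ n :=
    one_add_mul_le_pow (by linarith [div_nonneg ht hx.le]) n
  calc x ^ n = x ^ n * 1 := (mul_one _).symm
    _ ≤ x ^ n * (2 * (1 - t / x) ^ n) := by
        gcongr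
        linarith [show (1 + -(t / x)) ^ n = (1 - t / x) ^ n by ring_nf]
    _ = 2 * (x - t) ^ n := by
        rw [mul_left_comm, ← mul_pow]
        congr 2
        field_simp

lemma factorial_mul_choose_sub_le {m σ : ℕ} (n : ℕ) (hσm : σ ≤ m) :
    m ! * n.choose (m - σ) ≤ m ^ σ * n ^ (m - σ) := by
  rw [← factorial_mul_descFactorial hσm, mul_comm (m - σ)!, mul_assoc,
    ← descFactorial_eq_factorial_mul_choose]
  exact Nat.mul_le_mul (descFactorial_le_pow m σ) (descFactorial_le_pow n (m - σ))

lemma sub_pow_le_factorial_mul_choose (n k : ℕ) : (n - k) ^ k ≤ k ! * n.choose k := by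
  rw [← descFactorial_eq_factorial_mul_choose]
  exact (Nat.pow_le_pow_left (by omega) k).trans (pow_sub_le_descFactorial n k)

lemma choose_sub_mul_pow_le {c m σ : ℕ} (hσm : σ ≤ m) (hc : 8 * m ^ 2 + 1 ≤ c) :
    c.choose (m - σ) * c ^ σ ≤ 2 * m ^ σ * (c - 3 * m).choose m := by
  have h4m : 4 * m ≤ c := by nlinarith
  have hc0 : (0 : ℝ) < c := by exact_mod_cast (by omega : 0 < c)
  have hcm : c ^ m ≤ 2 * (c - 4 * m) ^ m := by
    have hbern : 2 * m * (4 * m) ≤ c := by nlinarith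
    rw [← Nat.cast_le (α := ℝ)]
    push_cast [h4m]
    exact pow_le_two_mul_sub_pow m hc0 (by positivity) (by exact_mod_cast hbern)
  have hden := sub_pow_le_factorial_mul_choose (c - 3 * m) m
  rw [show c - 3 * m - m = c - 4 * m by omega] at hden
  refine Nat.le_of_mul_le_mul_left ?_ (factorial_pos m)
  calc m ! * (c.choose (m - σ) * c ^ σ) = m ! * c.choose (m - σ) * c ^ σ := by ring
    _ ≤ m ^ σ * c ^ (m - σ) * c ^ σ := Nat.mul_le_mul_right _ (factorial_mul_choose_sub_le c hσm)
    _ = m ^ σ * c ^ m := by rw [mul_assoc, ← pow_add, Nat.sub_add_cancel hσm]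
    _ ≤ m ^ σ * (2 * (m ! * (c - 3 * m).choose m)) :=
        Nat.mul_le_mul_left _ (hcm.trans (Nat.mul_le_mul_left 2 hden))
    _ = m ! * (2 * m ^ σ * (c - 3 * m).choose m) := by ring

theorem choose_ratio_bound_general (m σ : ℕ) (hσm : σ ≤ m) :
    ∃ c₀ : ℕ, ∀ c : ℕ, c₀ ≤ c → 3 * m ≤ c → (m : ℝ) / c ≤ 1 / 9 →
      (c.choose (m - σ) : ℝ) / ((c - 3 * m).choose m : ℝ)
        ≤ 2 * ((m : ℝ) / c) ^ σ := by
  refine ⟨8 * m ^ 2 + 1, fun c hc _ _ => ?_⟩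
  have hc0 : (0 : ℝ) < c := by exact_mod_cast (by omega : 0 < c)
  have h4m : 4 * m ≤ c := by nlinarith
  have hden : (0 : ℝ) < (c - 3 * m).choose m := by
    exact_mod_cast choose_pos (by omega : m ≤ c - 3 * m)
  rw [div_le_iff₀ hden, div_pow]
  calc (c.choose (m - σ) : ℝ) = (c.choose (m - σ) * c ^ σ : ℕ) / (c : ℝ) ^ σ := by
        push_cast; field_simp
    _ ≤ (2 * m ^ σ * (c - 3 * m).choose m : ℕ) / (c : ℝ) ^ σ := by
        gcongr ?_ / _; exact_mod_cast choose_sub_mul_pow_le hσm hc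
    _ = _ := by push_cast; ring

/-- For positive integers `σ ≤ m` and all sufficiently large `c` (so that
    `m/c` is sufficiently small), with `3m ≤ c` and `m/c ≤ 1/9`, we have
    `C(c, m-σ)/C(c-3m, m) ≤ 2·(m/c)^σ`. -/
theorem choose_ratio_bound (m σ : ℕ) (hm : 0 < m) (hσ : 0 < σ) (hσm : σ ≤ m) :
    ∃ c₀ : ℕ, ∀ c : ℕ, c₀ ≤ c → 3 * m ≤ c → (m : ℝ) / c ≤ 1 / 9 →
      (c.choose (m - σ) : ℝ) / ((c - 3 * m).choose m : ℝ)
        ≤ 2 * ((m : ℝ) / c) ^ σ :=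
  choose_ratio_bound_general m σ hσm
end

section
/- Let d ≥ 1 and let G be a d-regular graph on n vertices. Fix a matching N with m edges on a vertex set of size n, and let π be a uniformly random bijection from V(G) to that vertex set. Then the probability that {π^{-1}(x), π^{-1}(y)} ∈ E(G) for every edge {x,y} of N is at most (d/(n - 2m))^m. -/
/-!
Induct on the edges of the matching. For an edge `ab` of `M`, send a bijection `π` that pulls
`M` back into `G`, together with a vertex `c` outside the support of `M`, to `π` followed by the
transposition `(b c)`; it pulls `M` minus `ab` back into `G`. This map is at most `d`-to-one: the
pair `(π, c)` is recovered from its image `π'` and from `π⁻¹ b`, a neighbour of `π'⁻¹ a` in `G`.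
The support of `M` has at most `2m` vertices, so each edge costs a factor `d / (n - 2m)`.
-/

open Finset

theorem Equiv.symm_trans_swap_apply_of_ne {V V' : Type*} [DecidableEq V'] (π : V ≃ V')
    {b c z : V'} (hb : z ≠ b) (hc : z ≠ c) : (π.trans (Equiv.swap b c)).symm z = π.symm z := by
  rw [Equiv.symm_trans_apply, Equiv.symm_swap, Equiv.swap_apply_of_ne_of_ne hb hc]

namespace SimpleGraph

variable {V V' : Type*} [Fintype V] [Fintype V']

theorem ncard_support_le_two_mul_ncard_edgeSet (M : SimpleGraph V') :
    M.support.ncard ≤ 2 * M.edgeSet.ncard := by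
  classical
  calc M.support.ncard = ∑ v ∈ M.support.toFinset, 1 := by
        rw [Set.ncard_eq_toFinset_card', card_eq_sum_ones]
    _ ≤ ∑ v ∈ M.support.toFinset, M.degree v :=
        sum_le_sum fun v hv => (M.degree_pos_iff_mem_support v).2 (Set.mem_toFinset.1 hv)
    _ ≤ ∑ v, M.degree v := sum_le_sum_of_subset (subset_univ _)
    _ = 2 * M.edgeSet.ncard := by
        rw [sum_degrees_eq_twice_card_edges, ← Set.ncard_coe_finset, coe_edgeFinset]

open scoped Classical in
noncomputable def pullbackEquivs (G : SimpleGraph V) (M : SimpleGraph V') : Finset (V ≃ V') :=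
  {π | ∀ a b, M.Adj a b → G.Adj (π.symm a) (π.symm b)}

variable {G : SimpleGraph V} {M : SimpleGraph V'} {π : V ≃ V'}

theorem mem_pullbackEquivs :
    π ∈ pullbackEquivs G M ↔ ∀ a b, M.Adj a b → G.Adj (π.symm a) (π.symm b) := by
  simp [pullbackEquivs]

theorem card_pullbackEquivs (G : SimpleGraph V) (M : SimpleGraph V') :
    #(pullbackEquivs G M) =
      Nat.card {π : V ≃ V' // ∀ a b, M.Adj a b → G.Adj (π.symm a) (π.symm b)} := by
  classical
  rw [Nat.card_eq_fintype_card, Fintype.card_subtype, pullbackEquivs]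

variable {a b c : V'}

theorem trans_swap_mem_pullbackEquivs_deleteEdges [DecidableEq V'] (hπ : π ∈ pullbackEquivs G M)
    (hb : ∀ w, M.Adj b w → w = a) (hc : c ∉ M.support) :
    π.trans (Equiv.swap b c) ∈ pullbackEquivs G (M.deleteEdges {s(a, b)}) := by
  rw [mem_pullbackEquivs] at hπ ⊢
  intro x y hxy'
  obtain ⟨hxy, hne⟩ := deleteEdges_adj.1 hxy'
  rw [Set.mem_singleton_iff] at hne
  have hxb : x ≠ b := by rintro rfl; exact hne (by rw [hb y hxy, Sym2.eq_swap])
  have hyb : y ≠ b := by rintro rfl; exact hne (by rw [hb x hxy.symm])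
  have hxc : x ≠ c := by rintro rfl; exact hc ⟨y, hxy⟩
  have hyc : y ≠ c := by rintro rfl; exact hc ⟨x, hxy.symm⟩
  rw [π.symm_trans_swap_apply_of_ne hxb hxc, π.symm_trans_swap_apply_of_ne hyb hyc]
  exact hπ x y hxy

theorem card_pullbackEquivs_mul_ncard_compl_support_le {d : ℕ}
    (hdeg : ∀ v, (G.neighborSet v).ncard ≤ d) (hab : M.Adj a b) (hb : ∀ w, M.Adj b w → w = a) :
    #(pullbackEquivs G M) * M.supportᶜ.ncard
      ≤ d * #(pullbackEquivs G (M.deleteEdges {s(a, b)})) := by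
  classical
  rw [Set.ncard_eq_toFinset_card', ← card_product]
  refine card_le_mul_card_image_of_maps_to (f := fun p => p.1.trans (Equiv.swap b p.2)) ?_ d ?_
  · rintro ⟨π, c⟩ hp
    rw [mem_product, Set.mem_toFinset] at hp
    exact trans_swap_mem_pullbackEquivs_deleteEdges hp.1 hb hp.2
  intro π' _
  have hrecover : ∀ p ∈ {p ∈ pullbackEquivs G M ×ˢ M.supportᶜ.toFinset |
      p.1.trans (Equiv.swap b p.2) = π'},
      p = (π'.trans (Equiv.swap b (π' (p.1.symm b))), π' (p.1.symm b)) := by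
    rintro ⟨π, c⟩ hp
    obtain ⟨-, rfl⟩ := mem_filter.1 hp
    ext <;> simp [Equiv.trans_assoc]
  calc _ ≤ #(G.neighborSet (π'.symm a)).toFinset := by
        refine card_le_card_of_injOn (fun p => p.1.symm b) ?_ ?_
        · rintro ⟨π, c⟩ hp
          rw [coe_filter, Set.mem_ofPred_eq, mem_product, Set.mem_toFinset] at hp
          obtain ⟨⟨hπ, hc⟩, rfl⟩ := hp
          have ha : a ∈ M.support := ⟨b, hab⟩
          rw [mem_coe, Set.mem_toFinset, mem_neighborSet,
            π.symm_trans_swap_apply_of_ne hab.ne (ne_of_mem_of_not_mem ha hc)]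
          exact mem_pullbackEquivs.1 hπ a b hab
        · intro p hp q hq hpq
          rw [hrecover p hp, hrecover q hq]
          simp only at hpq
          rw [hpq]
    _ ≤ d := by rw [← Set.ncard_eq_toFinset_card']; exact hdeg _

theorem card_pullbackEquivs_mul_pow_le {d : ℕ} (hdeg : ∀ v, (G.neighborSet v).ncard ≤ d)
    (hM : ∀ v, (M.neighborSet v).ncard ≤ 1) :
    #(pullbackEquivs G M) * (Nat.card V' - 2 * M.edgeSet.ncard) ^ M.edgeSet.ncard
      ≤ d ^ M.edgeSet.ncard * Nat.card (V ≃ V') := by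
  induction hm : M.edgeSet.ncard generalizing M with
  | zero =>
    classical
    simpa [Nat.card_eq_fintype_card] using card_le_univ (pullbackEquivs G M)
  | succ m ih =>
    obtain ⟨e, he⟩ := Set.nonempty_of_ncard_ne_zero (s := M.edgeSet) (by omega)
    induction e using Sym2.ind with | _ a b => ?_
    have hab : M.Adj a b := he
    have hb : ∀ w, M.Adj b w → w = a := fun w hw =>
      Set.ncard_le_one (Set.toFinite _) |>.1 (hM b) w hw a hab.symm
    have hM' : ∀ v, ((M.deleteEdges {s(a, b)}).neighborSet v).ncard ≤ 1 := fun v =>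
      (Set.ncard_le_ncard (fun w hw => (deleteEdges_adj.1 hw).1)).trans (hM v)
    have hm' : (M.deleteEdges {s(a, b)}).edgeSet.ncard = m := by
      rw [edgeSet_deleteEdges, Set.ncard_sdiff_singleton_of_mem he, hm, Nat.add_sub_cancel]
    have hcompl : Nat.card V' - 2 * (m + 1) ≤ M.supportᶜ.ncard := by
      rw [Set.ncard_compl]
      have := ncard_support_le_two_mul_ncard_edgeSet M
      omega
    set n := Nat.card V'
    calc #(pullbackEquivs G M) * (n - 2 * (m + 1)) ^ (m + 1)
        = #(pullbackEquivs G M) * (n - 2 * (m + 1)) * (n - 2 * (m + 1)) ^ m := by ring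
      _ ≤ d * #(pullbackEquivs G (M.deleteEdges {s(a, b)})) * (n - 2 * m) ^ m := by
        gcongr ?_ * ?_
        · exact (Nat.mul_le_mul_left _ hcompl).trans
            (card_pullbackEquivs_mul_ncard_compl_support_le hdeg hab hb)
        · exact Nat.pow_le_pow_left (by omega) m
      _ ≤ d ^ (m + 1) * Nat.card (V ≃ V') := by
        rw [mul_assoc, pow_succ', mul_assoc]
        exact Nat.mul_le_mul_left d (hm' ▸ ih hM' hm')

end SimpleGraph

open SimpleGraph

theorem matching_embedding_probability_general {V V' : Type*} [Fintype V] [Fintype V']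
    (G : SimpleGraph V) (M : SimpleGraph V') (d n m : ℕ)
    (hn' : Fintype.card V' = n)
    (hreg : ∀ v, (G.neighborSet v).ncard = d)
    (hmatch : ∀ v, (M.neighborSet v).ncard ≤ 1)
    (hm : M.edgeSet.ncard = m) (hmn : 2 * m < n) :
    (Nat.card {π : V ≃ V' //
        ∀ a b, M.Adj a b → G.Adj (π.symm a) (π.symm b)} : ℝ)
      ≤ ((d : ℝ) / ((n : ℝ) - 2 * m)) ^ m * (Nat.card (V ≃ V') : ℝ) := by
  have hcount := card_pullbackEquivs_mul_pow_le (fun v => (hreg v).le) hmatch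
  rw [Nat.card_eq_fintype_card, hn', hm, card_pullbackEquivs] at hcount
  have hgap : ((n - 2 * m : ℕ) : ℝ) = (n : ℝ) - 2 * m := by push_cast [hmn.le]; ring
  have hpos : (0 : ℝ) < (n : ℝ) - 2 * m := by rw [← hgap]; exact_mod_cast Nat.sub_pos_of_lt hmn
  rw [div_pow, div_mul_eq_mul_div, le_div_iff₀ (pow_pos hpos m), ← hgap]
  exact_mod_cast hcount

/-- Let `G` be `d`-regular on `n` vertices and `M` a matching with `m` edges
    on a vertex set of size `n`.  For a uniformly random bijection `π`, the
    probability that every edge of `M` pulls back to an edge of `G` is at most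
    `(d/(n - 2m))^m`; equivalently, the number of such bijections is at most
    `(d/(n - 2m))^m` times the total number of bijections. -/
theorem matching_embedding_probability {V V' : Type*} [Fintype V] [Fintype V']
    (G : SimpleGraph V) (M : SimpleGraph V') (d n m : ℕ) (hd : 1 ≤ d)
    (hn : Fintype.card V = n) (hn' : Fintype.card V' = n)
    (hreg : ∀ v, (G.neighborSet v).ncard = d)
    (hmatch : ∀ v, (M.neighborSet v).ncard ≤ 1)
    (hm : M.edgeSet.ncard = m) (hmn : 2 * m < n) :
    (Nat.card {π : V ≃ V' //
        ∀ a b, M.Adj a b → G.Adj (π.symm a) (π.symm b)} : ℝ)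
      ≤ ((d : ℝ) / ((n : ℝ) - 2 * m)) ^ m * (Nat.card (V ≃ V') : ℝ) :=
  matching_embedding_probability_general G M d n m hn' hreg hmatch hm hmn
end
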